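/- arXiv:2308.00901 — 10 statements merged into one kernel-verified Lean document; each statement's English description precedes it below -/
import Mathlib

section
/- Let λ be a nonzero real number and let t be a real number with |t| < 1. Then the series Σ_{n=1}^{∞} H_{n,λ} t^n converges and Σ_{n=1}^{∞} H_{n,λ} t^n = −log_λ(1−t)/(1−t). -/
open Finset

/-- The degenerate falling factorial `(x)_{n,λ} = x(x-λ)⋯(x-(n-1)λ)`, with `(x)_{0,λ} = 1`. -/
noncomputable def degFall (x lam : ℝ) (n : ℕ) : ℝ :=
  ∏ i ∈ Finset.range n, (x - i * lam)

/-- The degenerate harmonic numbers `H_{n,λ} = Σ_{k=1}^n (-λ)^(k-1) (1)_{k,1/λ} / k!`, `H_{0,λ}=0`. -/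
noncomputable def degHarm (lam : ℝ) (n : ℕ) : ℝ :=
  ∑ k ∈ Finset.Icc 1 n, (-lam) ^ (k - 1) * degFall 1 (1 / lam) k / (k.factorial : ℝ)

/-- The degenerate harmonic numbers of order `α`:
`H_{n,λ}(α) = Σ_{k=1}^n (-λ)^(k-1) (1)_{k,1/λ} / (k^α (k-1)!)`, `H_{0,λ}(α)=0`. -/
noncomputable def degHarmOrd (lam : ℝ) (α : ℕ) (n : ℕ) : ℝ :=
  ∑ k ∈ Finset.Icc 1 n,
    (-lam) ^ (k - 1) * degFall 1 (1 / lam) k / ((k : ℝ) ^ α * ((k - 1).factorial : ℝ))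

/-- The alternating degenerate harmonic numbers of order `α`:
`H̄_{n,λ}(α) = Σ_{k=1}^n C(n,k) λ^(k-1) (1)_{k,1/λ} / (k^α (k-1)!)`, `H̄_{0,λ}(α)=0`. -/
noncomputable def altDegHarmOrd (lam : ℝ) (α : ℕ) (n : ℕ) : ℝ :=
  ∑ k ∈ Finset.Icc 1 n,
    (n.choose k : ℝ) * lam ^ (k - 1) * degFall 1 (1 / lam) k /
      ((k : ℝ) ^ α * ((k - 1).factorial : ℝ))

/-- The degenerate logarithm: `degLog λ x = (x^λ - 1)/λ`, i.e. `log_λ(1+t) = degLog λ (1+t)`. -/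
noncomputable def degLog (lam x : ℝ) : ℝ :=
  (x ^ lam - 1) / lam

/-- The degenerate polylogarithm
`Li_{k,λ}(x) = Σ_{n=1}^∞ (-λ)^(n-1) (1)_{n,1/λ} x^n / ((n-1)! n^k)` (as a `tsum`, reindexed). -/
noncomputable def degPolylog (k : ℕ) (lam x : ℝ) : ℝ :=
  ∑' n : ℕ, (-lam) ^ n * degFall 1 (1 / lam) (n + 1) * x ^ (n + 1) /
    ((n.factorial : ℝ) * ((n : ℝ) + 1) ^ k)

/-- The degenerate hyperharmonic numbers of order `α`:
`H_{n,λ}^{(1)}(α) = H_{n,λ}(α)`, `H_{n,λ}^{(r)}(α) = Σ_{k=1}^n H_{k,λ}^{(r-1)}(α)` for `r ≥ 2`. -/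
noncomputable def degHyperHarm (lam : ℝ) (α : ℕ) : ℕ → ℕ → ℝ
  | 0, _ => 0
  | 1, n => degHarmOrd lam α n
  | r + 2, n => ∑ k ∈ Finset.Icc 1 n, degHyperHarm lam α (r + 1) k

/-! Since `λ^k (1)_{k,1/λ} = (λ)_{k,1}`, the `k`-th summand of `H_{n,λ}` equals
`-(-1)^k binom(λ, k) / λ` for `k ≥ 1`, so by the binomial series these summands are the
coefficients of `-((1 - t)^λ - 1)/λ = -log_λ(1 - t)`. The numbers `H_{n,λ}` are their partial
sums, and multiplying an absolutely convergent power series by the geometric series `1/(1 - t)`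
(a Cauchy product) yields the power series of its partial sums. -/

theorem Real.choose_eq_degFall_div_factorial (a : ℝ) (k : ℕ) :
    Ring.choose a k = degFall a 1 k / k.factorial := by
  rw [Ring.choose_eq_smul, ← Polynomial.aeval_eq_smeval, Polynomial.aeval_def,
    Polynomial.eval₂_eq_eval_map, descPochhammer_map, descPochhammer_eval_eq_prod_range, degFall,
    smul_eq_mul, inv_mul_eq_div]
  simp

theorem pow_mul_degFall_one_div {lam : ℝ} (hlam : lam ≠ 0) (k : ℕ) :
    lam ^ k * degFall 1 (1 / lam) k = degFall lam 1 k := by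
  have hpow : lam ^ k = ∏ _i ∈ Finset.range k, lam := by simp
  rw [degFall, degFall, hpow, ← Finset.prod_mul_distrib]
  refine Finset.prod_congr rfl fun i _ => ?_
  field_simp

theorem Real.hasSum_choose_mul_pow (a : ℝ) {x : ℝ} (hx : |x| < 1) :
    HasSum (fun n => Ring.choose a n * x ^ n) ((1 + x) ^ a) := by
  have := Real.one_add_rpow_hasFPowerSeriesOnBall_zero (a := a) |>.hasSum (y := x) ?_
  · simpa [binomialSeries, FormalMultilinearSeries.ofScalars_apply_eq, mul_comm] using this
  · simpa [Real.enorm_eq_ofReal_abs] using hx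

theorem Real.summable_norm_choose_mul_pow (a : ℝ) {x : ℝ} (hx : |x| < 1) :
    Summable (fun n => ‖Ring.choose a n * x ^ n‖) := by
  have := (binomialSeries ℝ a).summable_norm_apply (x := x) ?_
  · simpa [binomialSeries, FormalMultilinearSeries.ofScalars_apply_eq, mul_comm] using this
  · exact Metric.eball_subset_eball Real.one_add_rpow_hasFPowerSeriesOnBall_zero.r_le
      (by simpa [Real.enorm_eq_ofReal_abs] using hx)

theorem hasSum_sum_range_mul_pow {𝕜 : Type*} [NormedField 𝕜] {c : ℕ → 𝕜} {s t : 𝕜}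
    (ht : ‖t‖ < 1) (hc : Summable fun k => ‖c k * t ^ k‖) (hs : HasSum (fun k => c k * t ^ k) s) :
    HasSum (fun n => (∑ k ∈ Finset.range (n + 1), c k) * t ^ n) (s / (1 - t)) := by
  have hgeom := hasSum_geometric_of_norm_lt_one ht
  have hgeom_norm : Summable fun n => ‖t ^ n‖ := by
    simpa [norm_pow] using summable_geometric_of_lt_one (norm_nonneg t) ht
  have h := hasSum_sum_range_mul_of_summable_norm' hc hs.summable hgeom_norm hgeom.summable
  rw [hs.tsum_eq, hgeom.tsum_eq, ← div_eq_mul_inv] at h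
  refine h.congr_fun fun n => ?_
  rw [Finset.sum_mul]
  refine Finset.sum_congr rfl fun k hk => ?_
  rw [mul_assoc, ← pow_add, Nat.add_sub_cancel' (Finset.mem_range_succ_iff.mp hk)]

/-- The summands of `degHarm`, with constant term `0`: read literally at `k = 0`, the formula
`(-λ)^(k-1) (1)_{k,1/λ} / k!` would give `1`, because `0 - 1 = 0` in `ℕ`. -/
noncomputable def degLogCoeff (lam : ℝ) : ℕ → ℝ
  | 0 => 0
  | k + 1 => (-lam) ^ k * degFall 1 (1 / lam) (k + 1) / (k + 1).factorial

theorem degHarm_eq_sum_range_degLogCoeff (lam : ℝ) (n : ℕ) :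
    degHarm lam n = ∑ k ∈ Finset.range (n + 1), degLogCoeff lam k := by
  rw [Finset.sum_range_succ', degHarm, ← Finset.Ico_add_one_right_eq_Icc,
    Finset.sum_Ico_eq_sum_range]
  simp [degLogCoeff, add_comm 1]

theorem degLogCoeff_succ_mul_pow {lam : ℝ} (hlam : lam ≠ 0) (k : ℕ) (t : ℝ) :
    degLogCoeff lam (k + 1) * t ^ (k + 1) =
      -(Ring.choose lam (k + 1) * (-t) ^ (k + 1)) / lam := by
  rw [degLogCoeff, Real.choose_eq_degFall_div_factorial, ← pow_mul_degFall_one_div hlam,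
    neg_pow, neg_pow t, pow_succ lam, pow_succ (-1 : ℝ)]
  field_simp

theorem hasSum_degLogCoeff_mul_pow {lam : ℝ} (hlam : lam ≠ 0) {t : ℝ} (ht : |t| < 1) :
    HasSum (fun k => degLogCoeff lam k * t ^ k) (-degLog lam (1 - t)) := by
  have hbin := Real.hasSum_choose_mul_pow lam (x := -t) (by rwa [abs_neg])
  rw [← hasSum_nat_add_iff' 1] at hbin ⊢
  simp only [degLogCoeff_succ_mul_pow hlam]
  convert (hbin.div_const lam).neg using 1
  · simp only [neg_div]
  · simp [degLog, degLogCoeff, sub_eq_add_neg]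

theorem summable_norm_degLogCoeff_mul_pow {lam : ℝ} (hlam : lam ≠ 0) {t : ℝ} (ht : |t| < 1) :
    Summable fun k => ‖degLogCoeff lam k * t ^ k‖ := by
  have hbin := Real.summable_norm_choose_mul_pow lam (x := -t) (by rwa [abs_neg])
  rw [← summable_nat_add_iff 1] at hbin ⊢
  simpa [degLogCoeff_succ_mul_pow hlam, norm_div] using hbin.div_const ‖lam‖

theorem stmt_0 (lam : ℝ) (hlam : lam ≠ 0) (t : ℝ) (ht : |t| < 1) :
    HasSum (fun n : ℕ => degHarm lam n * t ^ n)
      (-(degLog lam (1 - t)) / (1 - t)) := by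
  simpa [degHarm_eq_sum_range_degLogCoeff] using
    hasSum_sum_range_mul_pow (by rwa [Real.norm_eq_abs])
      (summable_norm_degLogCoeff_mul_pow hlam ht) (hasSum_degLogCoeff_mul_pow hlam ht)
end

section
/- Let λ be a nonzero real number and let n ≥ 1 be an integer. Then H_{n,−λ} = Σ_{k=1}^{n} C(n,k) (1)_{k,1/λ} λ^{k−1} / k!. -/
open Finset

/-!
Clearing the factor `λ^(k-1)` turns both summands into generalized binomial coefficients divided
by `λ`: `λ^k (1)_{k,-1/λ} = k! · multichoose λ k` and `λ^k (1)_{k,1/λ} = k! · choose λ k`.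
Summing over `k ≤ n`, the hockey-stick identity for `multichoose` and the Chu–Vandermonde identity
`∑ C(n,k) choose λ k = choose (λ + n) n` give the same value `choose (λ + n) n` for both sides.
-/

theorem Finset.sum_range_succ_eq_add_sum_Icc_one {M : Type*} [AddCommMonoid M] (f : ℕ → M)
    (n : ℕ) : ∑ k ∈ range (n + 1), f k = f 0 + ∑ k ∈ Icc 1 n, f k := by
  rw [range_eq_Ico, sum_eq_sum_Ico_succ_bot n.succ_pos, zero_add, Nat.succ_eq_add_one,
    Ico_add_one_right_eq_Icc]

namespace Ring

variable {R : Type*}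

theorem sum_range_multichoose [NonAssocSemiring R] [Pow R ℕ] [NatPowAssoc R] [BinomialRing R]
    (r : R) (n : ℕ) : ∑ k ∈ range (n + 1), multichoose r k = multichoose (r + 1) n := by
  induction n with
  | zero => simp
  | succ n ih => rw [sum_range_succ, ih, multichoose_succ_succ, add_comm]

theorem sum_range_choose_mul_choose [Ring R] [BinomialRing R] (r : R) (n : ℕ) :
    ∑ k ∈ range (n + 1), (n.choose k : R) * choose r k = choose (r + n) n := by
  rw [add_choose_eq n (Nat.cast_commute n r).symm, Nat.sum_antidiagonal_eq_sum_range_succ_mk]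
  refine sum_congr rfl fun k hk => ?_
  rw [choose_natCast, Nat.choose_symm (Nat.le_of_lt_succ (mem_range.mp hk))]
  exact (Nat.cast_commute _ _).eq

theorem sum_Icc_multichoose [Ring R] [BinomialRing R] (r : R) (n : ℕ) :
    ∑ k ∈ Icc 1 n, multichoose r k = choose (r + n) n - 1 := by
  have h : multichoose (r + 1) n = choose (r + n) n := by
    rw [multichoose_eq, add_right_comm, add_sub_cancel_right]
  rw [← h, ← sum_range_multichoose, sum_range_succ_eq_add_sum_Icc_one, multichoose_zero_right,
    add_sub_cancel_left]

theorem sum_Icc_choose_mul_choose [Ring R] [BinomialRing R] (r : R) (n : ℕ) :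
    ∑ k ∈ Icc 1 n, (n.choose k : R) * choose r k = choose (r + n) n - 1 := by
  rw [← sum_range_choose_mul_choose, sum_range_succ_eq_add_sum_Icc_one, Nat.choose_zero_right,
    choose_zero_right, Nat.cast_one, one_mul, add_sub_cancel_left]

end Ring

theorem degFall_mul_pow (c x lam : ℝ) (k : ℕ) :
    c ^ k * degFall x lam k = degFall (c * x) (c * lam) k := by
  rw [degFall, degFall, ← card_range k, ← prod_const, card_range, ← prod_mul_distrib]
  exact prod_congr rfl fun i _ => by ring

theorem degFall_one_right (x : ℝ) (k : ℕ) : degFall x 1 k = k.factorial * Ring.choose x k := by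
  rw [← nsmul_eq_mul, ← Ring.descPochhammer_eq_factorial_smul_choose, ← Polynomial.aeval_eq_smeval,
    Polynomial.aeval_def, Polynomial.eval₂_eq_eval_map, descPochhammer_map,
    descPochhammer_eval_eq_prod_range, degFall]
  simp

theorem degFall_neg_one_right (x : ℝ) (k : ℕ) :
    degFall x (-1) k = k.factorial * Ring.multichoose x k := by
  have h := degFall_mul_pow (-1) x (-1) k
  rw [neg_one_mul, neg_one_mul, neg_neg, degFall_one_right, Ring.choose_neg', Units.smul_def,
    Int.coe_negOnePow_natCast, zsmul_eq_mul] at h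
  push_cast at h
  have hsq : ((-1 : ℝ) ^ k) ^ 2 = 1 := by rw [← pow_mul, mul_comm, pow_mul]; simp
  linear_combination (-1) ^ k * h - (degFall x (-1) k - k.factorial * Ring.multichoose x k) * hsq

theorem degHarm_neg_eq_sum_multichoose {lam : ℝ} (hlam : lam ≠ 0) (n : ℕ) :
    degHarm (-lam) n = (∑ k ∈ Icc 1 n, Ring.multichoose lam k) / lam := by
  rw [degHarm, sum_div]
  refine sum_congr rfl fun k hk => ?_
  have h := degFall_mul_pow lam 1 (1 / -lam) k
  rw [mul_one, mul_one_div, div_neg_self hlam, degFall_neg_one_right,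
    ← pow_sub_one_mul (Nat.one_le_iff_ne_zero.mp (mem_Icc.mp hk).1)] at h
  rw [neg_neg, div_eq_div_iff (by positivity) hlam]
  linear_combination h

theorem sum_choose_mul_degFall_eq {lam : ℝ} (hlam : lam ≠ 0) (n : ℕ) :
    ∑ k ∈ Icc 1 n, (n.choose k : ℝ) * degFall 1 (1 / lam) k * lam ^ (k - 1) / k.factorial =
      (∑ k ∈ Icc 1 n, (n.choose k : ℝ) * Ring.choose lam k) / lam := by
  rw [sum_div]
  refine sum_congr rfl fun k hk => ?_
  have h := degFall_mul_pow lam 1 (1 / lam) k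
  rw [mul_one, mul_one_div, div_self hlam, degFall_one_right,
    ← pow_sub_one_mul (Nat.one_le_iff_ne_zero.mp (mem_Icc.mp hk).1)] at h
  rw [div_eq_div_iff (by positivity) hlam]
  linear_combination (n.choose k : ℝ) * h

theorem stmt_1_general (lam : ℝ) (hlam : lam ≠ 0) (n : ℕ) :
    degHarm (-lam) n =
      ∑ k ∈ Finset.Icc 1 n,
        (n.choose k : ℝ) * degFall 1 (1 / lam) k * lam ^ (k - 1) / (k.factorial : ℝ) := by
  rw [degHarm_neg_eq_sum_multichoose hlam, sum_choose_mul_degFall_eq hlam,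
    Ring.sum_Icc_multichoose, Ring.sum_Icc_choose_mul_choose]

theorem stmt_1 (lam : ℝ) (hlam : lam ≠ 0) (n : ℕ) (hn : 1 ≤ n) :
    degHarm (-lam) n =
      ∑ k ∈ Finset.Icc 1 n,
        (n.choose k : ℝ) * degFall 1 (1 / lam) k * lam ^ (k - 1) / (k.factorial : ℝ) :=
  stmt_1_general lam hlam n
end

section
/- Let λ be a nonzero real number and let n ≥ 1 be an integer. Then (1)_{n,1/λ} λ^{n−1} / n! = Σ_{k=1}^{n} (−1)^{n−k} C(n,k) H_{k,−λ}. -/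
open Finset

/-!
Write `C(x, n)` for the binomial coefficient with real upper index. Then
`λ^n (1)_{n,1/λ} = n! C(λ, n)`, and with the reflection `C(-λ, k) = (-1)^k C(λ+k-1, k)` the
increment `H_{k+1,-λ} - H_{k,-λ}` becomes `C(λ+k, k+1)/λ`.
By Pascal's rule the forward difference of `k ↦ C(x+k, k+j)` is `k ↦ C(x+k, k+j+1)`, so the
`n`-th forward difference of `k ↦ H_{k,-λ}` at `0` is `C(λ, n)/λ`, which is the left-hand side.
The right-hand side is that same `n`-th difference, expanded in shifts by Newton's formula.
-/

open Finset Nat fwdDiff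

theorem Ring.choose_eq_prod_sub_div_factorial {K : Type*} [Field K] [CharZero K] (x : K)
    (n : ℕ) : Ring.choose x n = (∏ i ∈ range n, (x - i)) / n ! := by
  rw [Ring.choose_eq_smul, ← Polynomial.aeval_eq_smeval, ← descPochhammer_eval_eq_prod_range,
    Polynomial.aeval_def, Polynomial.eval₂_eq_eval_map, descPochhammer_map, smul_eq_mul,
    inv_mul_eq_div]

section ChooseAddSelf

variable {R : Type*} [NonAssocRing R] [Pow R ℕ] [NatPowAssoc R] [BinomialRing R]

theorem fwdDiff_choose_add_self (x : R) (j : ℕ) :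
    Δ_[1] (fun k : ℕ ↦ Ring.choose (x + k) (k + j)) =
      fun k : ℕ ↦ Ring.choose (x + k) (k + j + 1) := by
  ext k
  simp only [fwdDiff, Nat.cast_add, Nat.cast_one, ← add_assoc, Nat.add_right_comm k 1 j,
    Ring.choose_succ_succ, add_sub_cancel_left]

theorem fwdDiff_iter_choose_add_self (x : R) (j m : ℕ) :
    (Δ_[1])^[m] (fun k : ℕ ↦ Ring.choose (x + k) (k + j)) =
      fun k : ℕ ↦ Ring.choose (x + k) (k + j + m) := by
  induction m with
  | zero => rfl
  | succ m ih =>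
    rw [Function.iterate_succ_apply', ih]
    simpa only [Nat.add_assoc] using fwdDiff_choose_add_self x (j + m)

end ChooseAddSelf

theorem fwdDiff_iter_eq_sum_Icc_of_apply_zero {G : Type*} [AddCommGroup G] {f : ℕ → G}
    (hf : f 0 = 0) (n : ℕ) :
    (Δ_[1])^[n] f 0 = ∑ k ∈ Icc 1 n, ((-1 : ℤ) ^ (n - k) * n.choose k) • f k := by
  rw [fwdDiff_iter_eq_sum_shift, range_eq_Ico, sum_eq_sum_Ico_succ_bot (Nat.succ_pos n),
    Nat.succ_eq_add_one, Ico_add_one_right_eq_Icc]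
  simp only [zero_add, smul_eq_mul, mul_one, hf, smul_zero]

theorem degFall_eq_factorial_mul_pow_mul_choose {lam : ℝ} (hlam : lam ≠ 0) (x : ℝ) (n : ℕ) :
    degFall x lam n = n ! * lam ^ n * Ring.choose (x / lam) n := by
  have hfactor : ∀ i ∈ range n, x - i * lam = lam * (x / lam - i) := fun i _ ↦ by
    field_simp
  rw [degFall, prod_congr rfl hfactor, prod_mul_distrib, prod_const, card_range,
    Ring.choose_eq_prod_sub_div_factorial]
  field_simp

theorem degHarm_zero (lam : ℝ) : degHarm lam 0 = 0 := rfl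

theorem degHarm_succ_sub (lam : ℝ) (k : ℕ) :
    degHarm lam (k + 1) - degHarm lam k =
      (-lam) ^ k * degFall 1 (1 / lam) (k + 1) / (k + 1)! := by
  rw [degHarm, degHarm, sum_Icc_succ_top (by omega), add_sub_cancel_left, Nat.add_sub_cancel]

theorem fwdDiff_degHarm_neg {lam : ℝ} (hlam : lam ≠ 0) :
    Δ_[1] (degHarm (-lam)) = lam⁻¹ • fun k : ℕ ↦ Ring.choose (lam + k) (k + 1) := by
  ext k
  rw [fwdDiff, degHarm_succ_sub, degFall_eq_factorial_mul_pow_mul_choose (by simpa using hlam),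
    one_div_one_div, Ring.choose_neg, Units.smul_def, Int.coe_negOnePow_natCast, zsmul_eq_mul,
    Nat.cast_add_one, ← add_assoc, add_sub_cancel_right]
  -- the sign `(-1) ^ (k + 1)` from `choose_neg` cancels the one in `(1 / -lam) ^ (k + 1)`
  push_cast
  simp only [Pi.smul_apply, smul_eq_mul, neg_neg, one_div, inv_neg]
  field_simp
  rw [mul_assoc (lam ^ k * lam), ← mul_pow, neg_mul_neg, mul_one, one_div, inv_pow, pow_succ]
  field_simp

theorem stmt_2 (lam : ℝ) (hlam : lam ≠ 0) (n : ℕ) (hn : 1 ≤ n) :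
    degFall 1 (1 / lam) n * lam ^ (n - 1) / (n.factorial : ℝ) =
      ∑ k ∈ Finset.Icc 1 n, (-1 : ℝ) ^ (n - k) * (n.choose k : ℝ) * degHarm (-lam) k := by
  obtain ⟨m, rfl⟩ := Nat.exists_eq_add_of_le' hn
  have hrhs : ∑ k ∈ Icc 1 (m + 1), (-1 : ℝ) ^ (m + 1 - k) * ((m + 1).choose k : ℝ) *
      degHarm (-lam) k = (Δ_[1])^[m + 1] (degHarm (-lam)) 0 := by
    rw [fwdDiff_iter_eq_sum_Icc_of_apply_zero (degHarm_zero _)]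
    simp only [zsmul_eq_mul, Int.cast_mul, Int.cast_pow, Int.cast_neg, Int.cast_one,
      Int.cast_natCast]
  rw [hrhs, Function.iterate_succ_apply, fwdDiff_degHarm_neg hlam, fwdDiff_iter_const_smul,
    fwdDiff_iter_choose_add_self, degFall_eq_factorial_mul_pow_mul_choose (by simpa using hlam),
    one_div_one_div]
  simp only [Pi.smul_apply, smul_eq_mul, Nat.cast_zero, add_zero, zero_add, Nat.add_sub_cancel,
    Nat.add_comm 1 m]
  rw [one_div, inv_pow, pow_succ]
  field_simp
end

section
/- Let λ be a nonzero real number and let n ≥ 0 be an integer. Then H_{n+1,−λ}/(n+1) = Σ_{m=0}^{n} C(n,m) (1)_{m+1,1/λ} λ^m / ((m+1)² m!). -/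
open Finset

/-!
Both sides equal `(C(λ + n + 1, n + 1) - 1) / (λ (n + 1))`, with `C(x, k) = Ring.choose x k`.
Since `λ^k (1)_{k,1/λ} = (λ)_{k,1} = k! C(λ, k)`, the `k`-th term of `H_{n+1,-λ}` is
`C(λ + k - 1, k) / λ` (by `C(-λ, k) = (-1)^k C(λ + k - 1, k)`), and these telescope by Pascal's
rule. On the right, `C(n, m) / (m + 1) = C(n + 1, m + 1) / (n + 1)` turns the sum into
`Σ_k C(n + 1, k) C(λ, k) - 1`, which is Vandermonde's identity.
-/

open Nat

theorem pow_mul_degFall (c x lam : ℝ) (n : ℕ) :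
    c ^ n * degFall x lam n = degFall (c * x) (c * lam) n := by
  rw [degFall, degFall, ← card_range n, ← prod_const, card_range, ← prod_mul_distrib]
  exact prod_congr rfl fun i _ => by ring

theorem ringChoose_eq_degFall_div (x : ℝ) (n : ℕ) :
    Ring.choose x n = degFall x 1 n / n ! := by
  rw [Ring.choose_eq_smul, ← Polynomial.aeval_eq_smeval, Polynomial.aeval_def,
    Polynomial.eval₂_eq_eval_map, descPochhammer_map, descPochhammer_eval_eq_prod_range,
    smul_eq_mul, degFall]
  simp [div_eq_inv_mul]

theorem pow_mul_degFall_one_inv {lam : ℝ} (hlam : lam ≠ 0) (n : ℕ) :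
    lam ^ n * degFall 1 (1 / lam) n = n ! * Ring.choose lam n := by
  rw [pow_mul_degFall, mul_one, mul_one_div_cancel hlam, ringChoose_eq_degFall_div,
    mul_div_cancel₀ _ (by positivity)]

theorem degHarm_succ (lam : ℝ) (n : ℕ) :
    degHarm lam (n + 1) =
      degHarm lam n + (-lam) ^ n * degFall 1 (1 / lam) (n + 1) / (n + 1)! := by
  rw [degHarm, sum_Icc_succ_top (by omega), ← degHarm, Nat.add_sub_cancel]

theorem degHarm_neg_term {lam : ℝ} (hlam : lam ≠ 0) (n : ℕ) :
    lam ^ n * degFall 1 (1 / -lam) (n + 1) / (n + 1)! = Ring.choose (lam + n) (n + 1) / lam := by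
  have h := pow_mul_degFall_one_inv (neg_ne_zero.mpr hlam) (n + 1)
  rw [Ring.choose_neg, Units.smul_def, zsmul_eq_mul, Int.cast_negOnePow_natCast] at h
  rw [show lam + ((n + 1 : ℕ) : ℝ) - 1 = lam + n by push_cast; ring, neg_pow, pow_succ lam] at h
  have hsign : ((-1 : ℝ) ^ (n + 1)) ≠ 0 := pow_ne_zero _ (by norm_num)
  rw [div_eq_div_iff (by positivity) hlam]
  refine mul_left_cancel₀ hsign ?_
  linear_combination h

theorem degHarm_neg {lam : ℝ} (hlam : lam ≠ 0) (n : ℕ) :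
    degHarm (-lam) n = (Ring.choose (lam + n) n - 1) / lam := by
  induction n with
  | zero => simp [degHarm]
  | succ n ih =>
    rw [degHarm_succ, ih, neg_neg, degHarm_neg_term hlam, Nat.cast_succ, ← add_assoc,
      Ring.choose_succ_succ]
    ring

theorem sum_range_choose_mul_ringChoose (x : ℝ) (n : ℕ) :
    ∑ k ∈ range (n + 1), (n.choose k : ℝ) * Ring.choose x k = Ring.choose (x + n) n := by
  rw [Ring.add_choose_eq n (Commute.all _ _), Nat.sum_antidiagonal_eq_sum_range_succ_mk]
  refine sum_congr rfl fun k hk => ?_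
  rw [Ring.choose_natCast, Nat.choose_symm (Nat.lt_succ_iff.mp (mem_range.mp hk)), mul_comm]

theorem choose_mul_degFall_div {lam : ℝ} (hlam : lam ≠ 0) (n m : ℕ) :
    (n.choose m : ℝ) * degFall 1 (1 / lam) (m + 1) * lam ^ m / (((m : ℝ) + 1) ^ 2 * m !) =
      ((n + 1).choose (m + 1) : ℝ) * Ring.choose lam (m + 1) / (lam * ((n : ℝ) + 1)) := by
  have h := pow_mul_degFall_one_inv hlam (m + 1)
  rw [Nat.factorial_succ] at h
  push_cast at h
  have hc : ((n : ℝ) + 1) * n.choose m = (n + 1).choose (m + 1) * ((m : ℝ) + 1) := by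
    exact_mod_cast Nat.add_one_mul_choose_eq n m
  rw [div_eq_div_iff (by positivity) (by positivity)]
  linear_combination ((n : ℝ) + 1) * n.choose m * h +
    ((m : ℝ) + 1) * m ! * Ring.choose lam (m + 1) * hc

theorem stmt_3 (lam : ℝ) (hlam : lam ≠ 0) (n : ℕ) :
    degHarm (-lam) (n + 1) / ((n : ℝ) + 1) =
      ∑ m ∈ Finset.range (n + 1),
        (n.choose m : ℝ) * degFall 1 (1 / lam) (m + 1) * lam ^ m /
          (((m : ℝ) + 1) ^ 2 * (m.factorial : ℝ)) := by
  have hvander := sum_range_choose_mul_ringChoose lam (n + 1)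
  rw [sum_range_succ'] at hvander
  simp only [Nat.choose_zero_right, Nat.cast_one, Ring.choose_zero_right, mul_one] at hvander
  rw [degHarm_neg hlam, sum_congr rfl fun m _ => choose_mul_degFall_div hlam n m, ← sum_div,
    div_div, ← hvander]
  ring
end

section
/- Let λ be a real number with 0 < λ < 1. Then the improper integral ∫_0^∞ log_λ(1+x)/(x(1+x)) dx converges and equals ζ_{−λ}(2) = Σ_{n=1}^{∞} λ^{n−1} (1)_{n,−1/λ} / (n² (n−1)!). -/
/-
The substitution `u = x / (1 + x)` turns the integral into `∫₀¹ ((1 - u)^(-λ) - 1) / (λ u) du`.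
By the binomial series `(1 - u)^(-λ) = ∑ₙ multichoose λ n · uⁿ`, whose coefficients
`λ(λ+1)⋯(λ+n-1)/n! = λⁿ (1)_{n,-1/λ} / n!` are nonnegative, this integrand is a series of
nonnegative monomials. It is bounded by `(1 - u)^(-λ) / λ`, integrable on `(0, 1)` since `λ < 1`,
so dominated convergence allows termwise integration, and `∫₀¹ uⁿ du = 1 / (n + 1)` gives the
terms of `ζ_{-λ}(2)`.
-/

open Finset

open MeasureTheory

open scoped Nat

theorem ascPochhammer_eval_eq_prod_range {R : Type*} [CommSemiring R] (n : ℕ) (r : R) :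
    (ascPochhammer R n).eval r = ∏ i ∈ range n, (r + i) := by
  induction n with
  | zero => simp
  | succ n ih => simp [ascPochhammer_succ_right, ih, prod_range_succ]

theorem factorial_mul_multichoose_eq_prod_range {K : Type*} [Field K] [CharZero K] (a : K)
    (n : ℕ) : (n ! : K) * Ring.multichoose a n = ∏ i ∈ range n, (a + i) := by
  rw [← nsmul_eq_mul, Ring.factorial_nsmul_multichoose_eq_ascPochhammer,
    Polynomial.ascPochhammer_smeval_eq_eval, ascPochhammer_eval_eq_prod_range]

theorem multichoose_nonneg {a : ℝ} (ha : 0 ≤ a) (n : ℕ) : 0 ≤ Ring.multichoose a n := by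
  have h : 0 ≤ (n ! : ℝ) * Ring.multichoose a n :=
    factorial_mul_multichoose_eq_prod_range a n ▸ prod_nonneg fun i _ => by positivity
  exact (mul_nonneg_iff_of_pos_left (by positivity)).1 h

theorem pow_mul_degFall_one_neg_inv {lam : ℝ} (hlam : lam ≠ 0) (n : ℕ) :
    lam ^ n * degFall 1 (-1 / lam) n = ∏ i ∈ range n, (lam + i) := by
  rw [degFall, ← card_range n, ← prod_const, card_range, ← prod_mul_distrib]
  refine prod_congr rfl fun i _ => ?_
  field_simp
  ring

theorem multichoose_succ_div_eq {lam : ℝ} (hlam : lam ≠ 0) (n : ℕ) :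
    Ring.multichoose lam (n + 1) / lam / (n + 1)
      = lam ^ n * degFall 1 (-1 / lam) (n + 1) / (((n : ℝ) + 1) ^ 2 * (n ! : ℝ)) := by
  have h := (factorial_mul_multichoose_eq_prod_range lam (n + 1)).trans
    (pow_mul_degFall_one_neg_inv hlam (n + 1)).symm
  rw [Nat.factorial_succ] at h
  push_cast at h
  generalize degFall 1 (-1 / lam) (n + 1) = D at h ⊢
  field_simp
  linear_combination h

theorem hasSum_multichoose_mul_pow (a : ℝ) {u : ℝ} (hu : |u| < 1) :
    HasSum (fun n => Ring.multichoose a n * u ^ n) ((1 - u) ^ (-a)) := by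
  have h := (Real.one_div_one_sub_rpow_hasFPowerSeriesOnBall_zero a).hasSum
    (y := u) (by simpa [enorm_eq_nnnorm, ← NNReal.coe_lt_coe] using hu)
  rw [Real.rpow_neg (by linarith [le_abs_self u])]
  simpa [FormalMultilinearSeries.ofScalars_apply_eq, Ring.multichoose_eq, mul_comm] using h

theorem hasSum_multichoose_succ_mul_pow {a u : ℝ} (ha : a ≠ 0) (hu0 : u ≠ 0) (hu : |u| < 1) :
    HasSum (fun n => Ring.multichoose a (n + 1) / a * u ^ n) (((1 - u) ^ (-a) - 1) / (a * u)) := by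
  have h := ((hasSum_nat_add_iff' 1).2 (hasSum_multichoose_mul_pow a hu)).div_const (a * u)
  simp only [sum_range_one, Ring.multichoose_zero_right, pow_zero, mul_one] at h
  have hterm (n : ℕ) : Ring.multichoose a (n + 1) * u ^ (n + 1) / (a * u)
      = Ring.multichoose a (n + 1) / a * u ^ n := by
    rw [pow_succ]
    field_simp
  simpa only [hterm] using h

theorem integrableOn_one_sub_rpow_neg {a : ℝ} (ha : a < 1) :
    IntegrableOn (fun u : ℝ => (1 - u) ^ (-a)) (Set.Ioo 0 1) := by
  have h := (intervalIntegral.intervalIntegrable_rpow' (r := -a) (by linarith)).comp_sub_left 1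
    (a := 0) (b := 1)
  rw [sub_zero, sub_self] at h
  exact (intervalIntegrable_iff_integrableOn_Ioo_of_le zero_le_one).1 h.symm

theorem one_sub_rpow_neg_sub_one_div_le {a u : ℝ} (ha0 : 0 < a) (ha1 : a ≤ 1)
    (hu : u ∈ Set.Ioo 0 1) : ((1 - u) ^ (-a) - 1) / (a * u) ≤ (1 - u) ^ (-a) / a := by
  obtain ⟨hu0, hu1⟩ := hu
  have h1u : 0 < 1 - u := by linarith
  have hmul : (1 - u) * (1 - u) ^ (-a) ≤ 1 :=
    calc (1 - u) * (1 - u) ^ (-a) = (1 - u) ^ (1 + -a) := by rw [Real.rpow_add h1u, Real.rpow_one]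
      _ ≤ 1 := Real.rpow_le_one h1u.le (by linarith) (by linarith)
  rw [div_le_div_iff₀ (by positivity) ha0]
  nlinarith [mul_le_mul_of_nonneg_left hmul ha0.le]

theorem integrableOn_one_sub_rpow_neg_sub_one_div {a : ℝ} (ha0 : 0 < a) (ha1 : a < 1) :
    IntegrableOn (fun u : ℝ => ((1 - u) ^ (-a) - 1) / (a * u)) (Set.Ioo 0 1) := by
  refine ((integrableOn_one_sub_rpow_neg ha1).div_const a).mono'
    (by fun_prop : Measurable fun u : ℝ => ((1 - u) ^ (-a) - 1) / (a * u)).aestronglyMeasurable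
    ((ae_restrict_mem measurableSet_Ioo).mono fun u hu => ?_)
  have hsum := hasSum_multichoose_succ_mul_pow ha0.ne' hu.1.ne'
    (by rw [abs_of_pos hu.1]; exact hu.2)
  have hnonneg := hsum.nonneg fun n =>
    mul_nonneg (div_nonneg (multichoose_nonneg ha0.le _) ha0.le) (pow_nonneg hu.1.le n)
  rw [Real.norm_of_nonneg hnonneg]
  exact one_sub_rpow_neg_sub_one_div_le ha0 ha1.le hu

theorem setIntegral_Ioo_zero_one_pow (n : ℕ) : ∫ u in Set.Ioo (0 : ℝ) 1, u ^ n = 1 / (n + 1) := by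
  rw [← integral_Ioc_eq_integral_Ioo, ← intervalIntegral.integral_of_le zero_le_one, integral_pow]
  simp

theorem hasSum_integral_one_sub_rpow_neg_sub_one_div {a : ℝ} (ha0 : 0 < a) (ha1 : a < 1) :
    HasSum (fun n : ℕ => Ring.multichoose a (n + 1) / a / (n + 1))
      (∫ u in Set.Ioo 0 1, ((1 - u) ^ (-a) - 1) / (a * u)) := by
  set F : ℕ → ℝ → ℝ := fun n u => Ring.multichoose a (n + 1) / a * u ^ n
  have hmem := ae_restrict_mem (μ := volume) (measurableSet_Ioo (a := (0 : ℝ)) (b := 1))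
  have hlim : ∀ᵐ u ∂volume.restrict (Set.Ioo 0 1),
      HasSum (fun n => F n u) (((1 - u) ^ (-a) - 1) / (a * u)) :=
    hmem.mono fun u hu => hasSum_multichoose_succ_mul_pow ha0.ne' hu.1.ne'
      (by rw [abs_of_pos hu.1]; exact hu.2)
  have hnorm (n : ℕ) : ∀ᵐ u ∂volume.restrict (Set.Ioo 0 1), ‖F n u‖ ≤ F n u :=
    hmem.mono fun u hu => (Real.norm_of_nonneg (mul_nonneg
      (div_nonneg (multichoose_nonneg ha0.le _) ha0.le) (pow_nonneg hu.1.le n))).le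
  have h := hasSum_integral_of_dominated_convergence F
    (fun n => (by fun_prop : Continuous (F n)).aestronglyMeasurable) hnorm
    (hlim.mono fun u hu => hu.summable)
    ((integrableOn_one_sub_rpow_neg_sub_one_div ha0 ha1).congr
      (hlim.mono fun u hu => hu.tsum_eq.symm)) hlim
  have hint (n : ℕ) : ∫ u in Set.Ioo 0 1, F n u = Ring.multichoose a (n + 1) / a / (n + 1) := by
    rw [integral_const_mul, setIntegral_Ioo_zero_one_pow, mul_one_div]
  simpa only [hint] using h

theorem image_div_one_add_Ioi : (fun x : ℝ => x / (1 + x)) '' Set.Ioi 0 = Set.Ioo 0 1 := by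
  ext u
  constructor
  · rintro ⟨x, hx, rfl⟩
    have hx : (0 : ℝ) < x := hx
    exact ⟨by positivity, (div_lt_one (by positivity)).2 (by linarith)⟩
  · rintro ⟨hu0, hu1⟩
    have h1u : 0 < 1 - u := by linarith
    refine ⟨u / (1 - u), div_pos hu0 h1u, ?_⟩
    field_simp
    ring

theorem hasDerivAt_div_one_add {x : ℝ} (hx : 1 + x ≠ 0) :
    HasDerivAt (fun x : ℝ => x / (1 + x)) ((1 + x) ^ 2)⁻¹ x :=
  ((hasDerivAt_id' x).div ((hasDerivAt_id' x).const_add 1) hx).congr_deriv (by ring)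

theorem injOn_div_one_add : Set.InjOn (fun x : ℝ => x / (1 + x)) (Set.Ioi 0) := by
  intro x hx y hy hxy
  have hx : (0 : ℝ) < x := hx
  have hy : (0 : ℝ) < y := hy
  rw [div_eq_div_iff (by positivity) (by positivity)] at hxy
  linarith

theorem integrableOn_Ioo_zero_one_iff (g : ℝ → ℝ) :
    IntegrableOn g (Set.Ioo 0 1) ↔
      IntegrableOn (fun x => ((1 + x) ^ 2)⁻¹ * g (x / (1 + x))) (Set.Ioi 0) := by
  rw [← image_div_one_add_Ioi,
    integrableOn_image_iff_integrableOn_abs_deriv_smul measurableSet_Ioi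
      (fun x hx => (hasDerivAt_div_one_add (by linarith [hx.out])).hasDerivWithinAt)
      injOn_div_one_add]
  simp only [abs_inv, abs_sq, smul_eq_mul]

theorem setIntegral_Ioo_zero_one_eq (g : ℝ → ℝ) :
    ∫ u in Set.Ioo 0 1, g u = ∫ x in Set.Ioi 0, ((1 + x) ^ 2)⁻¹ * g (x / (1 + x)) := by
  rw [← image_div_one_add_Ioi, integral_image_eq_integral_abs_deriv_smul measurableSet_Ioi
    (fun x hx => (hasDerivAt_div_one_add (by linarith [hx.out])).hasDerivWithinAt)
    injOn_div_one_add]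
  simp only [abs_inv, abs_sq, smul_eq_mul]

theorem inv_one_add_sq_mul_one_sub_rpow_neg_sub_one_div {lam x : ℝ} (hlam : lam ≠ 0)
    (hx : 0 < x) :
    ((1 + x) ^ 2)⁻¹ * (((1 - x / (1 + x)) ^ (-lam) - 1) / (lam * (x / (1 + x))))
      = degLog lam (1 + x) / (x * (1 + x)) := by
  have h1x : 0 < 1 + x := by linarith
  have hsub : 1 - x / (1 + x) = (1 + x)⁻¹ := by field_simp; ring
  rw [hsub, Real.inv_rpow h1x.le, Real.rpow_neg h1x.le, inv_inv, degLog]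
  field_simp

theorem stmt_5 (lam : ℝ) (hlam0 : 0 < lam) (hlam1 : lam < 1) :
    MeasureTheory.IntegrableOn (fun x : ℝ => degLog lam (1 + x) / (x * (1 + x)))
        (Set.Ioi 0) ∧
      ∫ x in Set.Ioi (0 : ℝ), degLog lam (1 + x) / (x * (1 + x)) =
        ∑' n : ℕ, lam ^ n * degFall 1 (-1 / lam) (n + 1) /
          (((n : ℝ) + 1) ^ 2 * (n.factorial : ℝ)) := by
  set g : ℝ → ℝ := fun u => ((1 - u) ^ (-lam) - 1) / (lam * u)
  have hsubst : Set.EqOn (fun x => ((1 + x) ^ 2)⁻¹ * g (x / (1 + x)))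
      (fun x => degLog lam (1 + x) / (x * (1 + x))) (Set.Ioi 0) :=
    fun x hx => inv_one_add_sq_mul_one_sub_rpow_neg_sub_one_div hlam0.ne' hx
  constructor
  · exact ((integrableOn_Ioo_zero_one_iff g).1
      (integrableOn_one_sub_rpow_neg_sub_one_div hlam0 hlam1)).congr_fun hsubst measurableSet_Ioi
  · rw [← setIntegral_congr_fun measurableSet_Ioi hsubst, ← setIntegral_Ioo_zero_one_eq,
      ← (hasSum_integral_one_sub_rpow_neg_sub_one_div hlam0 hlam1).tsum_eq]
    exact tsum_congr (multichoose_succ_div_eq hlam0.ne')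
end

section
/- Let λ be a nonzero real number, α a positive integer, and t a real number with |t| < 1. Then the series Σ_{n=1}^{∞} H_{n,λ}(α) t^n converges and Σ_{n=1}^{∞} H_{n,λ}(α) t^n = Li_{α,λ}(t)/(1−t). -/
open Finset

/-!
The summands of `H_{n,λ}(α)` are exactly the coefficients `c_k` of `Li_{α,λ}(t) = Σ c_k t^(k+1)`,
so `Σ H_{n,λ}(α) t^n` is the Cauchy product of `Li_{α,λ}(t)` with the geometric series
`1/(1 - t)`. Absolute convergence of `Σ c_k t^k` for `|t| < 1` comes from the recurrence
`c_{k+1} = c_k (k + 1 - λ)/(k + 1) ((k + 1)/(k + 2))^α`, whose ratios `1 + |λ|/(k + 1)` tend to `1`.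
-/

open Filter Topology

theorem summable_norm_mul_pow_of_norm_succ_le {𝕜 : Type*} [NormedDivisionRing 𝕜]
    {c : ℕ → 𝕜} {r : ℕ → ℝ} (hr : Tendsto r atTop (𝓝 1))
    (hc : ∀ᶠ n in atTop, ‖c (n + 1)‖ ≤ r n * ‖c n‖) {t : 𝕜} (ht : ‖t‖ < 1) :
    Summable fun n => ‖c n * t ^ n‖ := by
  have hρ : ‖t‖ < (1 + ‖t‖) / 2 := by linarith
  have hrt : Tendsto (fun n => r n * ‖t‖) atTop (𝓝 ‖t‖) := by
    simpa using hr.mul_const ‖t‖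
  refine summable_of_ratio_norm_eventually_le (r := (1 + ‖t‖) / 2) (by linarith) ?_
  filter_upwards [hc, hrt.eventually_le_const hρ] with n hcn hrn
  simp only [norm_norm, norm_mul, norm_pow, pow_succ]
  calc ‖c (n + 1)‖ * (‖t‖ ^ n * ‖t‖) ≤ r n * ‖c n‖ * (‖t‖ ^ n * ‖t‖) := by gcongr
    _ = r n * ‖t‖ * (‖c n‖ * ‖t‖ ^ n) := by ring
    _ ≤ (1 + ‖t‖) / 2 * (‖c n‖ * ‖t‖ ^ n) := by gcongr

noncomputable def polylogCoeff (lam : ℝ) (α n : ℕ) : ℝ :=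
  (-lam) ^ n * degFall 1 (1 / lam) (n + 1) / ((n.factorial : ℝ) * ((n : ℝ) + 1) ^ α)

theorem degFall_succ (x lam : ℝ) (n : ℕ) :
    degFall x lam (n + 1) = degFall x lam n * (x - n * lam) :=
  prod_range_succ _ _

theorem polylogCoeff_succ {lam : ℝ} (hlam : lam ≠ 0) (α n : ℕ) :
    polylogCoeff lam α (n + 1) =
      polylogCoeff lam α n * ((n + 1 - lam) / (n + 1)) * (((n : ℝ) + 1) / (n + 2)) ^ α := by
  simp only [polylogCoeff, degFall_succ, Nat.factorial_succ]
  push_cast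
  rw [div_pow]
  field_simp
  ring

theorem abs_polylogCoeff_succ_le {lam : ℝ} (hlam : lam ≠ 0) (α n : ℕ) :
    |polylogCoeff lam α (n + 1)| ≤ (1 + |lam| / (n + 1)) * |polylogCoeff lam α n| := by
  have hratio : |((n : ℝ) + 1 - lam) / (n + 1)| ≤ 1 + |lam| / (n + 1) := by
    rw [abs_div, abs_of_pos (by positivity : (0 : ℝ) < n + 1), one_add_div (by positivity)]
    gcongr
    exact (abs_sub _ _).trans_eq (by rw [abs_of_pos (by positivity : (0 : ℝ) < n + 1)])
  have hpow : |(((n : ℝ) + 1) / (n + 2)) ^ α| ≤ 1 := by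
    rw [abs_pow, abs_div, abs_of_pos (by positivity : (0 : ℝ) < n + 1),
      abs_of_pos (by positivity : (0 : ℝ) < n + 2)]
    exact pow_le_one₀ (by positivity) ((div_le_one (by positivity)).mpr (by linarith))
  rw [polylogCoeff_succ hlam, abs_mul, abs_mul, mul_comm _ |polylogCoeff lam α n|]
  calc |polylogCoeff lam α n| * |((n : ℝ) + 1 - lam) / (n + 1)| * |(((n : ℝ) + 1) / (n + 2)) ^ α|
      ≤ |polylogCoeff lam α n| * (1 + |lam| / (n + 1)) * 1 := by gcongr
    _ = _ := by ring

theorem summable_norm_polylogCoeff_mul_pow {lam : ℝ} (hlam : lam ≠ 0) (α : ℕ) {t : ℝ}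
    (ht : |t| < 1) : Summable fun n => ‖polylogCoeff lam α n * t ^ n‖ := by
  refine summable_norm_mul_pow_of_norm_succ_le (r := fun n : ℕ => 1 + |lam| / (n + 1)) ?_
    (Eventually.of_forall (abs_polylogCoeff_succ_le hlam α)) ht
  have hinv : Tendsto (fun n : ℕ => |lam| / ((n : ℝ) + 1)) atTop (𝓝 0) :=
    tendsto_const_nhds.div_atTop (tendsto_atTop_add_const_right _ 1 tendsto_natCast_atTop_atTop)
  simpa using hinv.const_add 1

theorem degPolylog_eq_tsum (α : ℕ) (lam x : ℝ) :
    degPolylog α lam x = ∑' n, polylogCoeff lam α n * x ^ (n + 1) := by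
  unfold degPolylog polylogCoeff
  congr 1 with n
  ring

theorem degHarmOrd_zero (lam : ℝ) (α : ℕ) : degHarmOrd lam α 0 = 0 := rfl

theorem degHarmOrd_succ (lam : ℝ) (α n : ℕ) :
    degHarmOrd lam α (n + 1) = ∑ k ∈ range (n + 1), polylogCoeff lam α k := by
  induction n with
  | zero => simp [degHarmOrd, polylogCoeff]
  | succ n ih =>
    rw [degHarmOrd, sum_Icc_succ_top (by omega), ← degHarmOrd, ih, sum_range_succ (n := n + 1)]
    simp only [polylogCoeff, Nat.add_sub_cancel]
    push_cast
    ring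

theorem stmt_6_general (lam : ℝ) (hlam : lam ≠ 0) (α : ℕ) (t : ℝ) (ht : |t| < 1) :
    HasSum (fun n : ℕ => degHarmOrd lam α n * t ^ n)
      (degPolylog α lam t / (1 - t)) := by
  have hgeom : Summable fun n => ‖t ^ n‖ := by
    simpa [norm_pow] using summable_geometric_of_lt_one (abs_nonneg t) ht
  have hcauchy := (hasSum_sum_range_mul_of_summable_norm
    (summable_norm_polylogCoeff_mul_pow hlam α ht) hgeom).mul_left t
  have hterm : ∀ n : ℕ, t * ∑ k ∈ range (n + 1), polylogCoeff lam α k * t ^ k * t ^ (n - k) =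
      degHarmOrd lam α (n + 1) * t ^ (n + 1) := fun n => by
    rw [degHarmOrd_succ, sum_mul, mul_sum]
    refine sum_congr rfl fun k hk => ?_
    rw [mul_assoc, ← pow_add, Nat.add_sub_cancel' (mem_range_succ_iff.mp hk)]
    ring
  have hsum : t * ((∑' n, polylogCoeff lam α n * t ^ n) * ∑' n, t ^ n) =
      degPolylog α lam t / (1 - t) := by
    simp only [degPolylog_eq_tsum, tsum_geometric_of_abs_lt_one ht, pow_succ, ← mul_assoc,
      tsum_mul_right, div_eq_mul_inv]
    ring
  simp only [hterm, hsum] at hcauchy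
  rwa [← hasSum_nat_add_iff' 1, sum_range_one, degHarmOrd_zero, zero_mul, sub_zero]

theorem stmt_6 (lam : ℝ) (hlam : lam ≠ 0) (α : ℕ) (hα : 1 ≤ α) (t : ℝ) (ht : |t| < 1) :
    HasSum (fun n : ℕ => degHarmOrd lam α n * t ^ n)
      (degPolylog α lam t / (1 - t)) :=
  stmt_6_general lam hlam α t ht
end

section
/- Let λ be a nonzero real number and let t be a real number with |t| < 1/2. Then Li_{2,λ}(t/(1+t)) = Σ_{n=1}^{∞} (−1)^{n−1} (H_{n,−λ}/n) t^n, where both series converge. -/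
open Finset

/-!
Substituting `x = t/(1+t)` and expanding `(1+t)^(-(k+1))` binomially turns `Li_{2,λ}(t/(1+t))`
into a double series in `k` and `m`. The coefficients `a_k` of `Li_{2,λ}` grow at most
polynomially (their ratio is `1 + O(1/k)`), so it converges absolutely as soon as `|t|/(1-|t|) < 1`, i.e. `|t| < 1/2`,
and summing it along antidiagonals gives the binomial transform `Σ_k (-1)^(n-k) C(n,k) a_k` as
the coefficient of `t^(n+1)`. Since `a_k = (-1)^k C(λ, k+1) / (λ (k+1))` and
`C(n,k)/(k+1) = C(n+1,k+1)/(n+1)`, Chu–Vandermonde evaluates this transform to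
`(-1)^n (C(λ+n+1, n+1) - 1) / (λ (n+1))`. On the other side,
`λ H_{n,-λ} = Σ_{k=1}^n λ(λ+1)⋯(λ+k-1)/k!`, which the hockey-stick identity evaluates to
`C(λ+n, n) - 1`.
-/

open Nat

theorem Ring.sum_range_multichoose_s7 {R : Type*} [NonAssocSemiring R] [Pow R ℕ] [NatPowAssoc R]
    [BinomialRing R] (r : R) (n : ℕ) :
    ∑ k ∈ range (n + 1), Ring.multichoose r k = Ring.multichoose (r + 1) n := by
  induction n with
  | zero => simp
  | succ n ih => rw [Finset.sum_range_succ, ih, Ring.multichoose_succ_succ, add_comm]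

theorem Ring.sum_range_choose_mul_choose_s7 {R : Type*} [Ring R] [BinomialRing R] (r : R) (n : ℕ) :
    ∑ k ∈ range (n + 1), (n.choose k : R) * Ring.choose r k = Ring.choose (r + n) n := by
  rw [Ring.add_choose_eq n (Nat.cast_commute n r).symm,
    Finset.Nat.sum_antidiagonal_eq_sum_range_succ_mk]
  refine Finset.sum_congr rfl fun k hk => ?_
  rw [Ring.choose_natCast, Nat.choose_symm (Finset.mem_range_succ_iff.mp hk)]
  exact Nat.cast_comm _ _

theorem HasSum.sum_antidiagonal {α : Type*} [AddCommMonoid α] [TopologicalSpace α]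
    [ContinuousAdd α] [RegularSpace α] {f : ℕ × ℕ → α} {a : α} (h : HasSum f a) :
    HasSum (fun n => ∑ p ∈ antidiagonal n, f p) a := by
  refine (HasAntidiagonal.sigmaAntidiagonalEquivProd.hasSum_iff.mpr h).sigma fun n => ?_
  rw [← Finset.sum_coe_sort]
  exact hasSum_fintype _

theorem summable_norm_mul_pow_of_norm_succ_le_s7 {E : Type*} [SeminormedAddCommGroup E]
    {a : ℕ → E} {C q : ℝ} (hq₀ : 0 ≤ q) (hq₁ : q < 1)
    (ha : ∀ n : ℕ, ‖a (n + 1)‖ ≤ (1 + C / (n + 1)) * ‖a n‖) :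
    Summable fun n => ‖a n‖ * q ^ n := by
  have hlim : Filter.Tendsto (fun n : ℕ => q * (1 + C * (1 / ((n : ℝ) + 1)))) Filter.atTop
      (nhds q) := by
    simpa using ((tendsto_one_div_add_atTop_nhds_zero_nat.const_mul C).const_add 1).const_mul q
  have hr : q < (1 + q) / 2 := by linarith
  refine summable_of_ratio_norm_eventually_le (r := (1 + q) / 2) (by linarith) ?_
  filter_upwards [hlim.eventually (ge_mem_nhds hr)] with n hn
  rw [Real.norm_of_nonneg (by positivity), Real.norm_of_nonneg (by positivity), pow_succ]
  calc ‖a (n + 1)‖ * (q ^ n * q) ≤ (1 + C / (n + 1)) * ‖a n‖ * (q ^ n * q) := by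
        gcongr; exact ha n
    _ = q * (1 + C * (1 / ((n : ℝ) + 1))) * (‖a n‖ * q ^ n) := by ring
    _ ≤ (1 + q) / 2 * (‖a n‖ * q ^ n) := by gcongr

theorem exists_hasSum_comp_div_one_add {𝕜 : Type*} [NormedField 𝕜] [CompleteSpace 𝕜]
    {a : ℕ → 𝕜} {t : 𝕜} (ht : ‖t‖ < 1)
    (ha : Summable fun k => ‖a k‖ * (‖t‖ / (1 - ‖t‖)) ^ (k + 1)) :
    ∃ S : 𝕜, HasSum (fun k => a k * (t / (1 + t)) ^ (k + 1)) S ∧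
      HasSum (fun n => (∑ k ∈ range (n + 1), (-1) ^ (n - k) * (n.choose k : 𝕜) * a k) *
        t ^ (n + 1)) S := by
  set f : ℕ × ℕ → 𝕜 := fun p => a p.1 * t ^ (p.1 + 1) * ((p.2 + p.1).choose p.1 * (-t) ^ p.2)
  set g : ℕ × ℕ → ℝ := fun p => ‖a p.1‖ * ‖t‖ ^ (p.1 + 1) * ((p.2 + p.1).choose p.1 * ‖t‖ ^ p.2)
  have hrow (k : ℕ) : HasSum (fun m => f (k, m)) (a k * (t / (1 + t)) ^ (k + 1)) := by
    have h := (hasSum_choose_mul_geometric_of_norm_lt_one k (by rwa [norm_neg])).mul_left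
      (a k * t ^ (k + 1))
    rwa [sub_neg_eq_add, ← mul_div_assoc, mul_one, mul_div_assoc, ← div_pow] at h
  have hrow_norm (k : ℕ) : HasSum (fun m => g (k, m)) (‖a k‖ * (‖t‖ / (1 - ‖t‖)) ^ (k + 1)) := by
    have h := (hasSum_choose_mul_geometric_of_norm_lt_one (r := ‖t‖) k
      (by rwa [norm_norm])).mul_left (‖a k‖ * ‖t‖ ^ (k + 1))
    rwa [← mul_div_assoc, mul_one, mul_div_assoc, ← div_pow] at h
  have hg : Summable g := (summable_prod_of_nonneg fun p => by positivity).mpr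
    ⟨fun k => (hrow_norm k).summable, by simpa only [(hrow_norm _).tsum_eq] using ha⟩
  have hfg (p : ℕ × ℕ) : ‖f p‖ ≤ g p := by
    simp only [f, g, norm_mul, norm_pow, norm_neg]
    gcongr
    simpa using Nat.norm_cast_le (α := 𝕜) ((p.2 + p.1).choose p.1)
  have hf := (hg.of_norm_bounded hfg).hasSum
  refine ⟨_, hf.prod_fiberwise hrow, hf.sum_antidiagonal.congr_fun fun n => ?_⟩
  rw [Finset.Nat.sum_antidiagonal_eq_sum_range_succ_mk, Finset.sum_mul]
  refine Finset.sum_congr rfl fun k hk => ?_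
  have hkn := Finset.mem_range_succ_iff.mp hk
  have hpow : t ^ (k + 1) * t ^ (n - k) = t ^ (n + 1) := by
    rw [← pow_add]; congr 1; omega
  simp only [f, Nat.sub_add_cancel hkn, neg_pow t]
  linear_combination -(-1) ^ (n - k) * (n.choose k : 𝕜) * a k * hpow

lemma degFall_mul_mul (c x lam : ℝ) (n : ℕ) :
    degFall (c * x) (c * lam) n = c ^ n * degFall x lam n := by
  simp only [degFall, ← mul_sub, mul_left_comm _ c, Finset.prod_mul_distrib, Finset.prod_const,
    Finset.card_range]

lemma degFall_one_eq_factorial_mul_choose (x : ℝ) (n : ℕ) :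
    degFall x 1 n = n ! * Ring.choose x n := by
  rw [Ring.choose_eq_smul, smul_eq_mul, mul_inv_cancel_left₀ (by positivity),
    ← Polynomial.aeval_eq_smeval, Polynomial.aeval_def, Polynomial.eval₂_eq_eval_map,
    descPochhammer_map, descPochhammer_eval_eq_prod_range, degFall]
  simp

lemma degFall_neg_one_eq_factorial_mul_multichoose (x : ℝ) (n : ℕ) :
    degFall x (-1) n = n ! * Ring.multichoose x n := by
  rw [← nsmul_eq_mul, Ring.factorial_nsmul_multichoose_eq_ascPochhammer,
    Polynomial.ascPochhammer_smeval_eq_eval, degFall]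
  induction n with
  | zero => simp
  | succ n ih => simp [ascPochhammer_succ_right, Finset.prod_range_succ, ← ih]

lemma mul_degHarm_neg {lam : ℝ} (hlam : lam ≠ 0) (n : ℕ) :
    lam * degHarm (-lam) n = ∑ k ∈ Icc 1 n, Ring.multichoose lam k := by
  rw [degHarm, Finset.mul_sum]
  refine Finset.sum_congr rfl fun k hk => ?_
  obtain ⟨j, rfl⟩ := Nat.exists_eq_add_of_le' (Finset.mem_Icc.mp hk).1
  have h := degFall_mul_mul lam 1 (1 / -lam) (j + 1)
  rw [mul_one, mul_one_div, div_neg, div_self hlam, degFall_neg_one_eq_factorial_mul_multichoose,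
    pow_succ] at h
  rw [neg_neg, Nat.add_sub_cancel, ← mul_div_assoc, eq_comm, eq_div_iff (by positivity)]
  linear_combination h

lemma mul_degHarm_neg_eq_choose {lam : ℝ} (hlam : lam ≠ 0) (n : ℕ) :
    lam * degHarm (-lam) n = Ring.choose (lam + n) n - 1 := by
  have h := Ring.sum_range_multichoose_s7 lam n
  rw [Finset.sum_range_eq_add_Ico _ n.succ_pos, Nat.succ_eq_add_one,
    Finset.Ico_add_one_right_eq_Icc, Ring.multichoose_zero_right, Ring.multichoose_eq,
    add_sub_right_comm, add_sub_cancel_right] at h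
  rw [mul_degHarm_neg hlam, ← h, add_sub_cancel_left]

noncomputable def degPolylogCoeff (k : ℕ) (lam : ℝ) (n : ℕ) : ℝ :=
  (-lam) ^ n * degFall 1 (1 / lam) (n + 1) / (n ! * ((n : ℝ) + 1) ^ k)

lemma degPolylogCoeff_two {lam : ℝ} (hlam : lam ≠ 0) (n : ℕ) :
    degPolylogCoeff 2 lam n = (-1) ^ n * Ring.choose lam (n + 1) / (lam * (n + 1)) := by
  have h := degFall_mul_mul lam 1 (1 / lam) (n + 1)
  rw [mul_one, mul_one_div_cancel hlam, degFall_one_eq_factorial_mul_choose,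
    factorial_succ, pow_succ] at h
  rw [degPolylogCoeff, neg_pow, div_eq_div_iff (by positivity) (by positivity)]
  push_cast at h
  linear_combination -(-1) ^ n * (n + 1) * h

lemma sum_choose_mul_degPolylogCoeff_two {lam : ℝ} (hlam : lam ≠ 0) (n : ℕ) :
    ∑ k ∈ range (n + 1), (-1) ^ (n - k) * (n.choose k : ℝ) * degPolylogCoeff 2 lam k =
      (-1) ^ n * (degHarm (-lam) (n + 1) / (n + 1)) := by
  have hvand := Ring.sum_range_choose_mul_choose_s7 lam (n + 1)
  rw [Finset.sum_range_succ', Nat.choose_zero_right, Ring.choose_zero_right, Nat.cast_one,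
    mul_one, ← eq_sub_iff_add_eq, ← mul_degHarm_neg_eq_choose hlam] at hvand
  have hterm : ∀ k ∈ range (n + 1), (-1) ^ (n - k) * (n.choose k : ℝ) * degPolylogCoeff 2 lam k =
      (-1) ^ n / (lam * (n + 1)) * ((n + 1).choose (k + 1) * Ring.choose lam (k + 1)) := by
    intro k hk
    have hchoose : ((n + 1 : ℕ) : ℝ) * n.choose k = (n + 1).choose (k + 1) * (k + 1 : ℕ) := by
      exact_mod_cast Nat.add_one_mul_choose_eq n k
    have hsign : (-1 : ℝ) ^ (n - k) * (-1) ^ k = (-1) ^ n := by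
      rw [← pow_add, Nat.sub_add_cancel (Finset.mem_range_succ_iff.mp hk)]
    rw [degPolylogCoeff_two hlam]
    push_cast at hchoose
    field_simp
    linear_combination
      Ring.choose lam (k + 1) * ((n + 1) * n.choose k * hsign + (-1) ^ n * hchoose)
  rw [Finset.sum_congr rfl hterm, ← Finset.mul_sum, hvand]
  field_simp

lemma degPolylogCoeff_succ {lam : ℝ} (hlam : lam ≠ 0) (k n : ℕ) :
    degPolylogCoeff k lam (n + 1) =
      degPolylogCoeff k lam n * ((n + 1 - lam) / (n + 1) * ((n + 1) / (n + 2)) ^ k) := by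
  rw [degPolylogCoeff, degPolylogCoeff, degFall, Finset.prod_range_succ, ← degFall,
    factorial_succ, pow_succ, div_pow]
  push_cast
  field_simp
  ring

lemma abs_degPolylogCoeff_succ_le {lam : ℝ} (hlam : lam ≠ 0) (k n : ℕ) :
    |degPolylogCoeff k lam (n + 1)| ≤ (1 + |lam| / (n + 1)) * |degPolylogCoeff k lam n| := by
  have hratio : |((n : ℝ) + 1 - lam) / (n + 1)| ≤ 1 + |lam| / (n + 1) := by
    rw [abs_div, abs_of_pos (by positivity : (0 : ℝ) < n + 1), one_add_div (by positivity)]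
    gcongr
    simpa [abs_of_pos (by positivity : (0 : ℝ) < n + 1)] using abs_sub ((n : ℝ) + 1) lam
  have hshrink : |(((n : ℝ) + 1) / (n + 2)) ^ k| ≤ 1 := by
    rw [abs_pow, abs_of_pos (by positivity)]
    exact pow_le_one₀ (by positivity) ((div_le_one (by positivity)).mpr (by linarith))
  rw [degPolylogCoeff_succ hlam, abs_mul, abs_mul, mul_comm]
  gcongr
  simpa using mul_le_mul hratio hshrink (abs_nonneg _) (by positivity)

theorem stmt_7 (lam : ℝ) (hlam : lam ≠ 0) (t : ℝ) (ht : |t| < 1 / 2) :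
    ∃ S : ℝ,
      HasSum (fun n : ℕ =>
        (-lam) ^ n * degFall 1 (1 / lam) (n + 1) * (t / (1 + t)) ^ (n + 1) /
          ((n.factorial : ℝ) * ((n : ℝ) + 1) ^ 2)) S ∧
      HasSum (fun n : ℕ =>
        (-1 : ℝ) ^ n * (degHarm (-lam) (n + 1) / ((n : ℝ) + 1)) * t ^ (n + 1)) S := by
  have ht₁ : |t| < 1 := ht.trans (by norm_num)
  have hq : |t| / (1 - |t|) < 1 := by rw [div_lt_one (by linarith)]; linarith
  have hsummable : Summable fun n => |degPolylogCoeff 2 lam n| * (|t| / (1 - |t|)) ^ (n + 1) := by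
    have h := summable_norm_mul_pow_of_norm_succ_le_s7 (a := degPolylogCoeff 2 lam)
      (div_nonneg (abs_nonneg t) (by linarith)) hq
      (abs_degPolylogCoeff_succ_le hlam 2)
    simpa only [pow_succ, ← mul_assoc, Real.norm_eq_abs] using h.mul_right (|t| / (1 - |t|))
  obtain ⟨S, hLi, hHarm⟩ :=
    exists_hasSum_comp_div_one_add (a := degPolylogCoeff 2 lam) ht₁ hsummable
  refine ⟨S, hLi.congr_fun fun n => ?_, hHarm.congr_fun fun n => ?_⟩
  · rw [degPolylogCoeff, div_mul_eq_mul_div, mul_right_comm]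
  · rw [sum_choose_mul_degPolylogCoeff_two hlam]
end

section
/- Let λ be a nonzero real number, α a positive integer, and t a real number with |t| < 1/2. Then the series Σ_{n=1}^{∞} \overline{H}_{n,λ}(α) t^n converges and Σ_{n=1}^{∞} \overline{H}_{n,λ}(α) t^n = −Li_{α,λ}(−t/(1−t))/(1−t). -/
open Finset

/-!
Writing `H̄_{n,λ}(α) = ∑_k C(n,k) c_k`, the identity `∑_n C(n,k) t^n = t^k / (1-t)^(k+1)` turns
the series, after exchanging the two summations, into `(1-t)⁻¹ ∑_k c_k (t/(1-t))^k`, which is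
`-Li_{α,λ}(-t/(1-t)) / (1-t)`. The exchange is justified by absolute convergence: the ratio
`|c_{k+1} / c_k|` is at most `1 + |λ|/k → 1`, while `|t| / (1-|t|) < 1` exactly when `|t| < 1/2`.
-/

open Filter Topology

theorem hasSum_choose_mul_pow {𝕜 : Type*} [NormedField 𝕜] [HasSummableGeomSeries 𝕜]
    (k : ℕ) {r : 𝕜} (hr : ‖r‖ < 1) :
    HasSum (fun n : ℕ => (n.choose k : 𝕜) * r ^ n) ((1 - r)⁻¹ * (r / (1 - r)) ^ k) := by
  have hvanish : ∑ i ∈ range k, (i.choose k : 𝕜) * r ^ i = 0 :=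
    sum_eq_zero fun i hi => by simp [Nat.choose_eq_zero_of_lt (mem_range.1 hi)]
  rw [← hasSum_nat_add_iff' k, hvanish, sub_zero,
    show (1 - r)⁻¹ * (r / (1 - r)) ^ k = 1 / (1 - r) ^ (k + 1) * r ^ k by
      rw [one_div, ← inv_pow, div_eq_mul_inv, mul_pow]; ring]
  exact ((hasSum_choose_mul_geometric_of_norm_lt_one k hr).mul_right (r ^ k)).congr_fun
    fun n => by rw [pow_add, mul_assoc]

theorem summable_of_norm_succ_le_of_tendsto {E : Type*} [NormedAddCommGroup E] [CompleteSpace E]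
    {f : ℕ → E} {ρ : ℕ → ℝ} {r : ℝ} (hr : r < 1) (hρ : Tendsto ρ atTop (𝓝 r))
    (hf : ∀ n, ‖f (n + 1)‖ ≤ ρ n * ‖f n‖) : Summable f := by
  refine summable_of_ratio_norm_eventually_le (r := (r + 1) / 2) (by linarith) ?_
  filter_upwards [hρ.eventually_lt_const (by linarith : r < (r + 1) / 2)] with n hn
  exact (hf n).trans (mul_le_mul_of_nonneg_right hn.le (norm_nonneg _))

theorem hasSum_sum_range_choose_mul_pow {a : ℕ → ℝ} {t : ℝ} (ht : |t| < 1)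
    (ha : Summable fun k => |a k| * (|t| / (1 - |t|)) ^ k) :
    HasSum (fun n => (∑ k ∈ range (n + 1), (n.choose k : ℝ) * a k) * t ^ n)
      ((1 - t)⁻¹ * ∑' k, a k * (t / (1 - t)) ^ k) := by
  set f : ℕ × ℕ → ℝ := fun p => a p.1 * ((p.2.choose p.1 : ℝ) * t ^ p.2)
  have hrow (k : ℕ) : HasSum (fun n => f (k, n)) (a k * ((1 - t)⁻¹ * (t / (1 - t)) ^ k)) :=
    (hasSum_choose_mul_pow k ht).mul_left (a k)
  have hrow_abs (k : ℕ) : HasSum (fun n => |f (k, n)|)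
      (|a k| * ((1 - |t|)⁻¹ * (|t| / (1 - |t|)) ^ k)) :=
    ((hasSum_choose_mul_pow k (r := |t|) (by rwa [Real.norm_eq_abs, abs_abs])).mul_left
      |a k|).congr_fun fun n => by simp only [f, abs_mul, abs_pow, Nat.abs_cast]
  have hcol (n : ℕ) :
      HasSum (fun k => f (k, n)) ((∑ k ∈ range (n + 1), (n.choose k : ℝ) * a k) * t ^ n) := by
    rw [sum_mul, ← sum_congr rfl fun k _ => (by ring : f (k, n) = n.choose k * a k * t ^ n)]
    exact hasSum_sum_of_ne_finset_zero fun k hk => by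
      simp [f, Nat.choose_eq_zero_of_lt (not_lt.1 (mt mem_range.2 hk))]
  have hf : Summable f := by
    refine summable_abs_iff.mp ((summable_prod_of_nonneg fun _ => abs_nonneg _).2
      ⟨fun k => (hrow_abs k).summable, ?_⟩)
    exact (ha.mul_left (1 - |t|)⁻¹).congr fun k => by rw [(hrow_abs k).tsum_eq]; ring
  have hrows := hf.hasSum.prod_fiberwise hrow
  have hcols := ((Equiv.prodComm ℕ ℕ).hasSum_iff.2 hf.hasSum).prod_fiberwise hcol
  have hsum : (1 - t)⁻¹ * ∑' k, a k * (t / (1 - t)) ^ k = ∑' p, f p := by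
    rw [← hrows.tsum_eq, ← tsum_mul_left]
    exact tsum_congr fun k => by ring
  rwa [hsum]

noncomputable def altDegHarmCoeff (lam : ℝ) (α k : ℕ) : ℝ :=
  lam ^ (k - 1) * degFall 1 (1 / lam) k / ((k : ℝ) ^ α * ((k - 1).factorial : ℝ))

theorem altDegHarmCoeff_zero (lam : ℝ) {α : ℕ} (hα : α ≠ 0) : altDegHarmCoeff lam α 0 = 0 := by
  simp [altDegHarmCoeff, zero_pow hα]

theorem altDegHarmOrd_eq_sum_range (lam : ℝ) {α : ℕ} (hα : α ≠ 0) (n : ℕ) :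
    altDegHarmOrd lam α n = ∑ k ∈ range (n + 1), (n.choose k : ℝ) * altDegHarmCoeff lam α k := by
  rw [range_eq_Ico, sum_eq_sum_Ico_succ_bot (Nat.succ_pos n), altDegHarmCoeff_zero lam hα,
    mul_zero, zero_add, altDegHarmOrd]
  exact sum_congr rfl fun k _ => by rw [altDegHarmCoeff]; ring

-- The factor `λ (1 - (m+1)/λ)` is not simplified to `λ - (m+1)`: this way the identity also
-- holds at `λ = 0`, where `1 / 0 = 0`.
theorem altDegHarmCoeff_add_two (lam : ℝ) (α m : ℕ) :
    altDegHarmCoeff lam α (m + 2) = altDegHarmCoeff lam α (m + 1) *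
      (lam * (1 - (m + 1) * (1 / lam)) / (m + 1)) * ((m + 1) / (m + 2)) ^ α := by
  have hdegFall : degFall 1 (1 / lam) (m + 2) =
      degFall 1 (1 / lam) (m + 1) * (1 - (m + 1) * (1 / lam)) := by
    rw [degFall, prod_range_succ, ← degFall]
    push_cast
    ring
  rw [altDegHarmCoeff, altDegHarmCoeff, hdegFall, show m + 2 - 1 = m + 1 from rfl,
    Nat.add_sub_cancel, Nat.factorial_succ, div_pow, pow_succ]
  push_cast
  field_simp

theorem abs_altDegHarmCoeff_add_two_le (lam : ℝ) (α m : ℕ) :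
    |altDegHarmCoeff lam α (m + 2)| ≤ (1 + |lam| / (m + 1)) * |altDegHarmCoeff lam α (m + 1)| := by
  have hm : (0 : ℝ) < m + 1 := by positivity
  have hfactor : |lam * (1 - (m + 1) * (1 / lam))| ≤ |lam| + (m + 1) := by
    rcases eq_or_ne lam 0 with rfl | hlam
    · simpa using hm.le
    · rw [mul_sub, mul_one, ← mul_assoc, mul_comm lam, mul_assoc, mul_one_div_cancel hlam,
        mul_one]
      exact (abs_sub _ _).trans_eq (by rw [abs_of_pos hm])
  have hratio : |((m + 1 : ℝ) / (m + 2)) ^ α| ≤ 1 := by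
    rw [abs_pow, abs_div, abs_of_pos hm, abs_of_pos (by positivity : (0 : ℝ) < m + 2)]
    exact pow_le_one₀ (by positivity) ((div_le_one (by positivity)).2 (by linarith))
  rw [altDegHarmCoeff_add_two, abs_mul, abs_mul, abs_div, abs_of_pos hm]
  calc
    _ ≤ |altDegHarmCoeff lam α (m + 1)| * (|lam * (1 - (m + 1) * (1 / lam))| / (m + 1)) :=
      mul_le_of_le_one_right (by positivity) hratio
    _ ≤ |altDegHarmCoeff lam α (m + 1)| * ((|lam| + (m + 1)) / (m + 1)) := by gcongr
    _ = (1 + |lam| / (m + 1)) * |altDegHarmCoeff lam α (m + 1)| := by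
      rw [add_div, div_self hm.ne']
      ring

theorem summable_abs_altDegHarmCoeff_mul_pow (lam : ℝ) (α : ℕ) {Q : ℝ} (hQ₀ : 0 ≤ Q)
    (hQ₁ : Q < 1) : Summable fun k => |altDegHarmCoeff lam α k| * Q ^ k := by
  rw [← summable_nat_add_iff 1]
  have hρ : Tendsto (fun m : ℕ => Q * (1 + |lam| / (m + 1))) atTop (𝓝 Q) := by
    simpa [div_eq_mul_inv] using
      ((tendsto_one_div_add_atTop_nhds_zero_nat.const_mul |lam|).const_add 1).const_mul Q
  refine summable_of_norm_succ_le_of_tendsto hQ₁ hρ fun m => ?_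
  simp only [Real.norm_eq_abs, abs_mul, abs_abs, abs_pow, abs_of_nonneg hQ₀]
  calc |altDegHarmCoeff lam α (m + 2)| * Q ^ (m + 2)
      ≤ (1 + |lam| / (m + 1)) * |altDegHarmCoeff lam α (m + 1)| * Q ^ (m + 2) := by
        gcongr
        exact abs_altDegHarmCoeff_add_two_le lam α m
    _ = Q * (1 + |lam| / (m + 1)) * (|altDegHarmCoeff lam α (m + 1)| * Q ^ (m + 1)) := by ring

theorem degPolylog_neg (lam : ℝ) {α : ℕ} (hα : α ≠ 0) (u : ℝ) :
    degPolylog α lam (-u) = -∑' k, altDegHarmCoeff lam α k * u ^ k := by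
  have hsupport : (Function.support fun k => altDegHarmCoeff lam α k * u ^ k) ⊆
      Set.range Nat.succ := by
    rintro (_ | m) hm
    · simp [altDegHarmCoeff_zero lam hα] at hm
    · exact ⟨m, rfl⟩
  rw [degPolylog, ← Nat.succ_injective.tsum_eq hsupport, ← tsum_neg]
  refine tsum_congr fun m => ?_
  have hsign : (-lam) ^ m * (-u) ^ (m + 1) = -(lam ^ m * u ^ (m + 1)) := by
    rw [pow_succ, ← mul_assoc, ← mul_pow, neg_mul_neg]
    ring
  rw [altDegHarmCoeff, Nat.succ_sub_one, Nat.succ_eq_add_one]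
  push_cast
  linear_combination (degFall 1 (1 / lam) (m + 1) / (m.factorial * ((m : ℝ) + 1) ^ α)) * hsign

theorem stmt_11_general (lam : ℝ) (α : ℕ) (hα : 1 ≤ α) (t : ℝ) (ht : |t| < 1 / 2) :
    HasSum (fun n : ℕ => altDegHarmOrd lam α n * t ^ n)
      (-(degPolylog α lam (-t / (1 - t))) / (1 - t)) := by
  have hα₀ : α ≠ 0 := Nat.one_le_iff_ne_zero.mp hα
  have hQ₀ : 0 ≤ |t| / (1 - |t|) := div_nonneg (abs_nonneg t) (by linarith)
  have hQ₁ : |t| / (1 - |t|) < 1 := (div_lt_one (by linarith)).2 (by linarith)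
  have h := hasSum_sum_range_choose_mul_pow (by linarith)
    (summable_abs_altDegHarmCoeff_mul_pow lam α hQ₀ hQ₁)
  simp only [← altDegHarmOrd_eq_sum_range lam hα₀] at h
  rwa [neg_div (1 - t) t, degPolylog_neg lam hα₀, neg_neg, div_eq_inv_mul]

theorem stmt_11 (lam : ℝ) (hlam : lam ≠ 0) (α : ℕ) (hα : 1 ≤ α) (t : ℝ) (ht : |t| < 1 / 2) :
    HasSum (fun n : ℕ => altDegHarmOrd lam α n * t ^ n)
      (-(degPolylog α lam (-t / (1 - t))) / (1 - t)) :=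
  stmt_11_general lam α hα t ht
end

section
/- Let λ be a nonzero real number, α a positive integer, and n ≥ 1 an integer. Then (1/n) \overline{H}_{n,λ}(α−1) = Σ_{m=1}^{n} C(n,m) (−1)^{m−1} H_{m,λ}(α). -/
open Finset

/-!
Expand `H_{m,λ}(α)` and swap the two summations. The `k`-th term then carries the tail
`∑_{m=k}^{n} (-1)^{m-1} C(n,m)` of an alternating binomial sum, which telescopes by Pascal's rule
to `(-1)^{k-1} C(n-1,k-1)`. This sign cancels the one in `(-λ)^{k-1}`, and the absorption
identity `k C(n,k) = n C(n-1,k-1)` trades one factor `1/k` for `1/n`.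
-/

theorem Finset.sum_Icc_sum_Icc_comm {M : Type*} [AddCommMonoid M] (a n : ℕ) (f : ℕ → ℕ → M) :
    ∑ m ∈ Icc a n, ∑ k ∈ Icc a m, f m k = ∑ k ∈ Icc a n, ∑ m ∈ Icc k n, f m k :=
  sum_comm' (by intro m k; simp only [mem_Icc]; omega)

theorem sum_Icc_choose_mul_neg_one_pow {R : Type*} [CommRing R] {n k : ℕ} (hk : 1 ≤ k)
    (hkn : k ≤ n) :
    ∑ m ∈ Icc k n, (n.choose m : R) * (-1) ^ (m - 1) = (n - 1).choose (k - 1) * (-1) ^ (k - 1) := by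
  obtain ⟨p, rfl⟩ : ∃ p, n = p + 1 := ⟨n - 1, by omega⟩
  set f : ℕ → R := fun i => -p.choose (i - 1) * (-1) ^ (i - 1)
  have htelescope : ∀ m ∈ Icc k (p + 1),
      ((p + 1).choose m : R) * (-1) ^ (m - 1) = f (m + 1) - f m := by
    intro m hm
    obtain ⟨j, rfl⟩ : ∃ j, m = j + 1 := ⟨m - 1, by grind⟩
    simp only [f, Nat.choose_succ_succ, add_tsub_cancel_right, pow_succ]
    push_cast
    ring
  rw [sum_congr rfl htelescope, sum_Icc_sub (by omega)]
  simp [f]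

theorem stmt_13_general (lam : ℝ) (α : ℕ) (hα : 1 ≤ α) (n : ℕ) :
    (1 / (n : ℝ)) * altDegHarmOrd lam (α - 1) n =
      ∑ m ∈ Finset.Icc 1 n, (n.choose m : ℝ) * (-1 : ℝ) ^ (m - 1) * degHarmOrd lam α m := by
  unfold altDegHarmOrd degHarmOrd
  simp_rw [mul_sum]
  rw [sum_Icc_sum_Icc_comm]
  refine sum_congr rfl fun k hk => ?_
  obtain ⟨hk1, hkn⟩ := mem_Icc.mp hk
  rw [← sum_mul, sum_Icc_choose_mul_neg_one_pow hk1 hkn]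
  obtain ⟨p, rfl⟩ : ∃ p, n = p + 1 := ⟨n - 1, by omega⟩
  obtain ⟨j, rfl⟩ : ∃ j, k = j + 1 := ⟨k - 1, by omega⟩
  obtain ⟨β, rfl⟩ : ∃ β, α = β + 1 := ⟨α - 1, by omega⟩
  have habsorb : ((p + 1 : ℕ) : ℝ) * p.choose j = (p + 1).choose (j + 1) * (j + 1) := by
    exact_mod_cast Nat.add_one_mul_choose_eq p j
  have hsign : ((-1 : ℝ) ^ j) ^ 2 = 1 := by rw [← pow_mul, pow_mul', neg_one_sq, one_pow]
  simp only [add_tsub_cancel_right, neg_pow lam]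
  field_simp
  rw [hsign, mul_one]
  push_cast at habsorb ⊢
  linear_combination -(lam ^ j * degFall 1 (1 / lam) (j + 1) * ((j : ℝ) + 1) ^ β) * habsorb

theorem stmt_13 (lam : ℝ) (hlam : lam ≠ 0) (α : ℕ) (hα : 1 ≤ α) (n : ℕ) (hn : 1 ≤ n) :
    (1 / (n : ℝ)) * altDegHarmOrd lam (α - 1) n =
      ∑ m ∈ Finset.Icc 1 n, (n.choose m : ℝ) * (-1 : ℝ) ^ (m - 1) * degHarmOrd lam α m :=
  stmt_13_general lam α hα n
end

section
/- Let λ be a nonzero real number, α a positive integer, and n ≥ 1 an integer. Then H_{n,λ}(α) = Σ_{m=1}^{n} C(n,m) (−1)^{m−1} \overline{H}_{m,λ}(α−1)/m. -/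
/-! Expanding `H̄_m(α-1)` and exchanging the two sums, the `k`-th term of `H_n(α)` must come with
the coefficient `Σ_m C(n,m) (-1)^(m-1) C(m,k) / m`. As `C(m,k) / m = C(m-1,k-1) / k`, this is `1/k`
times `Σ_j (-1)^j C(n,j+1) C(j,k-1)`, which Pascal's rule reduces to the sums
`Σ_j (-1)^j C(n,j) C(j,r)`: the coefficient of `y^r` in `(1 - (1+y))^n = (-y)^n`. -/

open Finset

open Polynomial in
theorem sum_range_neg_one_pow_mul_choose_mul_choose {R : Type*} [CommRing R] (n r : ℕ) :
    ∑ j ∈ range (n + 1), (-1 : R) ^ j * n.choose j * j.choose r =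
      if n = r then (-1) ^ n else 0 := by
  have h : ((C (-1) * (1 + X) + 1 : R[X]) ^ n).coeff r = (C ((-1) ^ n) * X ^ n : R[X]).coeff r := by
    congr 1; simp only [map_neg, map_one, map_pow]; ring
  rw [add_pow] at h
  simp only [mul_pow, ← C_pow, finsetSum_coeff, one_pow, mul_one, coeff_C_mul, ← Nat.cast_comm,
    coeff_natCast_mul, coeff_one_add_X_pow, coeff_X_pow, mul_ite, mul_zero, @eq_comm _ r] at h
  rw [← h]
  exact sum_congr rfl fun j _ ↦ by ring

theorem sum_range_neg_one_pow_mul_choose_succ_mul_choose {R : Type*} [CommRing R] (n r : ℕ) :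
    ∑ j ∈ range n, (-1 : R) ^ j * n.choose (j + 1) * j.choose r =
      if r < n then (-1) ^ r else 0 := by
  induction n with
  | zero => simp
  | succ n ih =>
    calc ∑ j ∈ range (n + 1), (-1 : R) ^ j * (n + 1).choose (j + 1) * j.choose r
        = ∑ j ∈ range (n + 1), (-1 : R) ^ j * n.choose j * j.choose r +
            ∑ j ∈ range (n + 1), (-1 : R) ^ j * n.choose (j + 1) * j.choose r := by
          simp only [Nat.choose_succ_succ', Nat.cast_add, mul_add, add_mul, sum_add_distrib]
      _ = (if n = r then (-1) ^ n else 0) + if r < n then (-1) ^ r else 0 := by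
          rw [sum_range_neg_one_pow_mul_choose_mul_choose, sum_range_succ _ n, ih,
            Nat.choose_succ_self, Nat.cast_zero, mul_zero, zero_mul, add_zero]
      _ = if r < n + 1 then (-1) ^ r else 0 := by
          split_ifs <;> first | omega | simp_all

section

variable {K : Type*} [Field K] [CharZero K]

theorem sum_Icc_choose_mul_neg_one_pow_mul_choose_div {n k : ℕ} (hk : 1 ≤ k) (hkn : k ≤ n) :
    ∑ m ∈ Icc 1 n, (n.choose m : K) * (-1) ^ (m - 1) * m.choose k / m = (-1) ^ (k - 1) / k := by
  obtain ⟨r, rfl⟩ : ∃ r, k = r + 1 := ⟨k - 1, by omega⟩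
  rw [← Ico_add_one_right_eq_Icc, sum_Ico_eq_sum_range, add_tsub_cancel_right]
  have hr : (r : K) + 1 ≠ 0 := Nat.cast_add_one_ne_zero r
  calc _ = ∑ j ∈ range n, (-1) ^ j * n.choose (j + 1) * j.choose r / ((r : K) + 1) := by
        refine sum_congr rfl fun j _ ↦ ?_
        have h : ((j : K) + 1) * j.choose r = (j + 1).choose (r + 1) * ((r : K) + 1) := by
          exact_mod_cast Nat.add_one_mul_choose_eq j r
        have hj : (j : K) + 1 ≠ 0 := Nat.cast_add_one_ne_zero j
        rw [add_comm 1 j, Nat.add_sub_cancel]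
        push_cast
        rw [div_eq_div_iff hj hr]
        linear_combination -(n.choose (j + 1) : K) * (-1) ^ j * h
    _ = (-1) ^ (r + 1 - 1) / ↑(r + 1) := by
        rw [← sum_div, sum_range_neg_one_pow_mul_choose_succ_mul_choose, if_pos (by omega)]
        push_cast; rfl

theorem sum_Icc_choose_mul_neg_one_pow_div_mul_sum_Icc_choose (a : ℕ → K) (n : ℕ) :
    ∑ m ∈ Icc 1 n,
        (n.choose m : K) * (-1) ^ (m - 1) / m * ∑ k ∈ Icc 1 m, (m.choose k : K) * a k =
      ∑ k ∈ Icc 1 n, (-1) ^ (k - 1) / k * a k := by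
  have extend : ∀ m ∈ Icc 1 n,
      ∑ k ∈ Icc 1 m, (m.choose k : K) * a k = ∑ k ∈ Icc 1 n, (m.choose k : K) * a k := by
    intro m hm
    refine sum_subset (Icc_subset_Icc_right (mem_Icc.1 hm).2) fun k hk hkm ↦ ?_
    rw [Nat.choose_eq_zero_of_lt (by simp_all), Nat.cast_zero, zero_mul]
  calc _ = ∑ k ∈ Icc 1 n,
        (∑ m ∈ Icc 1 n, (n.choose m : K) * (-1) ^ (m - 1) * m.choose k / m) * a k := by
        rw [sum_congr rfl fun m hm ↦ by rw [extend m hm]]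
        simp only [mul_sum, sum_mul]
        rw [sum_comm]
        exact sum_congr rfl fun k _ ↦ sum_congr rfl fun m _ ↦ by ring
    _ = _ := sum_congr rfl fun k hk ↦ by
        rw [sum_Icc_choose_mul_neg_one_pow_mul_choose_div (mem_Icc.1 hk).1 (mem_Icc.1 hk).2]

end

theorem stmt_14_general (lam : ℝ) (α : ℕ) (hα : 1 ≤ α) (n : ℕ) :
    degHarmOrd lam α n =
      ∑ m ∈ Finset.Icc 1 n,
        (n.choose m : ℝ) * (-1 : ℝ) ^ (m - 1) * (altDegHarmOrd lam (α - 1) m / (m : ℝ)) := by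
  obtain ⟨β, rfl⟩ : ∃ β, α = β + 1 := ⟨α - 1, by omega⟩
  set a : ℕ → ℝ := fun k ↦
    lam ^ (k - 1) * degFall 1 (1 / lam) k / ((k : ℝ) ^ β * ((k - 1).factorial : ℝ))
  have h_alt (m : ℕ) : altDegHarmOrd lam β m = ∑ k ∈ Icc 1 m, (m.choose k : ℝ) * a k :=
    sum_congr rfl fun k _ ↦ by ring
  rw [Nat.add_sub_cancel, degHarmOrd]
  calc _ = ∑ k ∈ Icc 1 n, (-1) ^ (k - 1) / k * a k := sum_congr rfl fun k _ ↦ by ring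
    _ = _ := by
      rw [← sum_Icc_choose_mul_neg_one_pow_div_mul_sum_Icc_choose a n]
      exact sum_congr rfl fun m _ ↦ by rw [h_alt]; ring

theorem stmt_14 (lam : ℝ) (hlam : lam ≠ 0) (α : ℕ) (hα : 1 ≤ α) (n : ℕ) (hn : 1 ≤ n) :
    degHarmOrd lam α n =
      ∑ m ∈ Finset.Icc 1 n,
        (n.choose m : ℝ) * (-1 : ℝ) ^ (m - 1) * (altDegHarmOrd lam (α - 1) m / (m : ℝ)) :=
  stmt_14_general lam α hα n
end
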